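/- Let D be a Dedekind domain, let H be a congruence subgroup of SL₂(D), let g₁, g₂ ∈ SL₂(D), and let 𝔮₁, 𝔮₂ be nonzero ideals of D such that gᵢ·T(x)·gᵢ⁻¹ ∈ H for all x ∈ 𝔮ᵢ (i = 1,2). Then there exists g₀ ∈ SL₂(D) such that g₀·T(x)·g₀⁻¹ ∈ H for all x ∈ 𝔮₁ + 𝔮₂. -/

import Mathlib

open Matrix

/-- The translation matrix `T(r) = [[1, r], [0, 1]]` in `SL₂(R)`. -/
def Tm (R : Type*) [CommRing R] (r : R) : Matrix.SpecialLinearGroup (Fin 2) R :=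
  ⟨!![1, r; 0, 1], by simp [Matrix.det_fin_two_of]⟩

/-- The principal congruence subgroup `SL₂(R, 𝔮)`, the kernel of reduction mod `𝔮`. -/
def SLmod (R : Type*) [CommRing R] (q : Ideal R) :
    Subgroup (Matrix.SpecialLinearGroup (Fin 2) R) :=
  (Matrix.SpecialLinearGroup.map (Ideal.Quotient.mk q)).ker

/-- `H` is a congruence subgroup: it contains a principal congruence subgroup of
nonzero level. -/
def IsCongruence {R : Type*} [CommRing R]
    (H : Subgroup (Matrix.SpecialLinearGroup (Fin 2) R)) : Prop :=
  ∃ q : Ideal R, q ≠ ⊥ ∧ SLmod R q ≤ H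

/-- `q` is the level `l(H)` of `H`: the largest ideal all of whose associated translations
lie in the normal core of `H` (equivalently, the largest ideal contained in the
quasi-level of `H`). -/
def IsLevel {R : Type*} [CommRing R]
    (H : Subgroup (Matrix.SpecialLinearGroup (Fin 2) R)) (q : Ideal R) : Prop :=
  (∀ r ∈ q, Tm R r ∈ H.normalCore) ∧
    ∀ I : Ideal R, (∀ r ∈ I, Tm R r ∈ H.normalCore) → I ≤ q

/-!
Let `SL₂(D, q) ≤ H` with `q ≠ 0`. Split `q = b₁ ⊓ b₂` into coprime ideals, `b₁` collecting the
primes at which the exponent of `q₁` is at most that of `q₂` and `b₂` the others; comparing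
exponents prime by prime gives `q₁ + q₂ ≤ q₁ ⊓ b₂ + q₂ ⊓ b₁`. For `J ≠ 0`, unimodular columns lift
along `D → D/J`, so `SL₂(D) → SL₂(D/J)` is onto, and by the Chinese remainder theorem some `g₀` is
congruent to `g₁` mod `b₁` and to `g₂` mod `b₂`. For `x ∈ q₁ ⊓ b₂` the conjugates `g₀ T(x) g₀⁻¹`
and `g₁ T(x) g₁⁻¹` agree mod `b₁` (as `g₀ ≡ g₁`) and mod `b₂` (both are `≡ 1`), so they differ by
an element of `SL₂(D, q) ≤ H`; symmetrically for `q₂ ⊓ b₁`, and `x ↦ g₀ T(x) g₀⁻¹` is additive.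
-/

open scoped MatrixGroups

section CommRing

variable {R S : Type*} [CommRing R] [CommRing S]

@[simp]
lemma coe_Tm (r : R) : (Tm R r : Matrix (Fin 2) (Fin 2) R) = !![1, r; 0, 1] := rfl

lemma Tm_zero : Tm R 0 = 1 := by
  ext i j
  fin_cases i <;> fin_cases j <;> simp

lemma Tm_add (r s : R) : Tm R (r + s) = Tm R r * Tm R s := by
  ext i j
  fin_cases i <;> fin_cases j <;> simp [Matrix.mul_apply, add_comm]

lemma conj_Tm_add (g : SL(2, R)) (r s : R) :
    g * Tm R (r + s) * g⁻¹ = (g * Tm R r * g⁻¹) * (g * Tm R s * g⁻¹) := by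
  rw [Tm_add]
  group

lemma map_Tm (f : R →+* S) (r : R) : Matrix.SpecialLinearGroup.map f (Tm R r) = Tm S (f r) := by
  ext i j
  fin_cases i <;> fin_cases j <;> simp

lemma eq_Tm_of_apply_zero (k : SL(2, R)) (h₀₀ : k 0 0 = 1) (h₁₀ : k 1 0 = 0) :
    k = Tm R (k 0 1) := by
  have h₁₁ : k 1 1 = 1 := by
    have hdet := k.det_coe
    rwa [Matrix.det_fin_two, h₀₀, h₁₀, one_mul, mul_zero, sub_zero] at hdet
  ext i j
  fin_cases i <;> fin_cases j <;> simp [h₀₀, h₁₀, h₁₁]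

lemma exists_eq_mul_Tm_of_col_eq {g g' : SL(2, R)} (h₀ : g 0 0 = g' 0 0) (h₁ : g 1 0 = g' 1 0) :
    ∃ t, g = g' * Tm R t := by
  have hdet : g' 0 0 * g' 1 1 - g' 0 1 * g' 1 0 = 1 := by
    rw [← Matrix.det_fin_two]
    exact g'.det_coe
  set k := g'⁻¹ * g
  have hk₀₀ : k 0 0 = 1 := by
    simp only [k, Matrix.SpecialLinearGroup.coe_mul, Matrix.SpecialLinearGroup.coe_inv,
      adjugate_fin_two, mul_apply, Fin.sum_univ_two, of_apply, cons_val', cons_val_fin_one,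
      cons_val_zero, cons_val_one, h₀, h₁]
    linear_combination hdet
  have hk₁₀ : k 1 0 = 0 := by
    simp only [k, Matrix.SpecialLinearGroup.coe_mul, Matrix.SpecialLinearGroup.coe_inv,
      adjugate_fin_two, mul_apply, Fin.sum_univ_two, of_apply, cons_val', cons_val_fin_one,
      cons_val_zero, cons_val_one, h₀, h₁]
    ring
  exact ⟨k 0 1, by rw [← eq_Tm_of_apply_zero k hk₀₀ hk₁₀, mul_inv_cancel_left]⟩

lemma Matrix.map_mk_eq_map_mk_iff {n : Type*} {I : Ideal R} {A B : Matrix n n R} :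
    A.map (Ideal.Quotient.mk I) = B.map (Ideal.Quotient.mk I) ↔ ∀ i j, A i j - B i j ∈ I := by
  simp [← Matrix.ext_iff, Ideal.Quotient.eq]

lemma Matrix.SpecialLinearGroup.map_mk_eq_map_mk_iff {I : Ideal R} {g g' : SL(2, R)} :
    map (Ideal.Quotient.mk I) g = map (Ideal.Quotient.mk I) g' ↔ ∀ i j, g i j - g' i j ∈ I := by
  simp only [ext_iff, map_apply_coe, RingHom.mapMatrix_apply, Matrix.map_apply,
    Ideal.Quotient.eq]

lemma Matrix.exists_map_mk_eq_map_mk {n : Type*} {b₁ b₂ : Ideal R} (hcop : b₁ ⊔ b₂ = ⊤)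
    (A₁ A₂ : Matrix n n R) : ∃ A : Matrix n n R,
      A.map (Ideal.Quotient.mk b₁) = A₁.map (Ideal.Quotient.mk b₁) ∧
      A.map (Ideal.Quotient.mk b₂) = A₂.map (Ideal.Quotient.mk b₂) := by
  obtain ⟨u, hu, v, hv, huv⟩ :=
    Submodule.mem_sup.1 (hcop ▸ Submodule.mem_top : (1 : R) ∈ b₁ ⊔ b₂)
  refine ⟨v • A₁ + u • A₂, map_mk_eq_map_mk_iff.2 fun i j => ?_,
    map_mk_eq_map_mk_iff.2 fun i j => ?_⟩
  · have h : (v • A₁ + u • A₂) i j - A₁ i j = u * (A₂ i j - A₁ i j) := by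
      simp only [add_apply, smul_apply, smul_eq_mul]
      linear_combination A₁ i j * huv
    exact h ▸ Ideal.mul_mem_right _ _ hu
  · have h : (v • A₁ + u • A₂) i j - A₂ i j = v * (A₁ i j - A₂ i j) := by
      simp only [add_apply, smul_apply, smul_eq_mul]
      linear_combination A₂ i j * huv
    exact h ▸ Ideal.mul_mem_right _ _ hv

lemma SLmod_inf (I J : Ideal R) : SLmod R (I ⊓ J) = SLmod R I ⊓ SLmod R J := by
  ext g
  simp only [Subgroup.mem_inf, SLmod, MonoidHom.mem_ker,
    ← map_one (Matrix.SpecialLinearGroup.map (Ideal.Quotient.mk _)),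
    Matrix.SpecialLinearGroup.map_mk_eq_map_mk_iff, Submodule.mem_inf, forall_and]

lemma Tm_mem_SLmod {q : Ideal R} {x : R} (hx : x ∈ q) : Tm R x ∈ SLmod R q := by
  rw [SLmod, MonoidHom.mem_ker, map_Tm, Ideal.Quotient.eq_zero_iff_mem.2 hx, Tm_zero]

lemma conj_Tm_mem_of_map_eq {H : Subgroup SL(2, R)} {b₁ b₂ : Ideal R}
    (hH : SLmod R b₁ ⊓ SLmod R b₂ ≤ H) {g₀ g : SL(2, R)}
    (hg : Matrix.SpecialLinearGroup.map (Ideal.Quotient.mk b₁) g₀ =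
      Matrix.SpecialLinearGroup.map (Ideal.Quotient.mk b₁) g) {x : R} (hx : x ∈ b₂)
    (h : g * Tm R x * g⁻¹ ∈ H) : g₀ * Tm R x * g₀⁻¹ ∈ H := by
  have hN : (SLmod R b₂).Normal := MonoidHom.normal_ker _
  have hmod₁ : (g₀ * Tm R x * g₀⁻¹) * (g * Tm R x * g⁻¹)⁻¹ ∈ SLmod R b₁ := by
    simp [SLmod, hg]
  have hmod₂ : (g₀ * Tm R x * g₀⁻¹) * (g * Tm R x * g⁻¹)⁻¹ ∈ SLmod R b₂ :=
    mul_mem (hN.conj_mem _ (Tm_mem_SLmod hx) g₀) (inv_mem (hN.conj_mem _ (Tm_mem_SLmod hx) g))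
  simpa only [inv_mul_cancel_right] using mul_mem (hH ⟨hmod₁, hmod₂⟩) h

end CommRing

section Dedekind

open UniqueFactorizationMonoid

variable {D : Type*} [CommRing D] [IsDedekindDomain D]

lemma Ideal.le_iff_count_normalizedFactors_le {I J : Ideal D} (hI : I ≠ ⊥) (hJ : J ≠ ⊥) :
    I ≤ J ↔ ∀ p, (normalizedFactors J).count p ≤ (normalizedFactors I).count p := by
  rw [← Ideal.dvd_iff_le, dvd_iff_normalizedFactors_le_normalizedFactors hJ hI,
    Multiset.le_iff_count]

lemma Ideal.count_normalizedFactors_sup {I J : Ideal D} (hI : I ≠ ⊥) (hJ : J ≠ ⊥) (p : Ideal D) :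
    (normalizedFactors (I ⊔ J)).count p =
      min ((normalizedFactors I).count p) ((normalizedFactors J).count p) := by
  classical
  rw [Ideal.sup_eq_prod_inf_factors hI hJ, normalizedFactors_prod_of_prime, Multiset.count_inter]
  exact fun p hp => prime_of_normalized_factor p (Multiset.mem_inter.1 hp).1

lemma Ideal.exists_coprime_mul_eq_filter_normalizedFactors {q : Ideal D} (hq : q ≠ ⊥)
    (P : Ideal D → Prop) [DecidablePred P] : ∃ b₁ b₂ : Ideal D, b₁ * b₂ = q ∧ b₁ ⊔ b₂ = ⊤ ∧
      normalizedFactors b₁ = (normalizedFactors q).filter P ∧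
      normalizedFactors b₂ = (normalizedFactors q).filter (¬ P ·) := by
  have hprime : ∀ Q : Ideal D → Prop, [DecidablePred Q] →
      ∀ p ∈ (normalizedFactors q).filter Q, Prime p :=
    fun _ _ p hp => prime_of_normalized_factor p (Multiset.mem_of_mem_filter hp)
  set b₁ := ((normalizedFactors q).filter P).prod
  set b₂ := ((normalizedFactors q).filter (¬ P ·)).prod
  have hmul : b₁ * b₂ = q := by
    rw [← Multiset.prod_add, Multiset.filter_add_not, prod_normalizedFactors_eq_self hq]
  have hf₁ : normalizedFactors b₁ = _ := normalizedFactors_prod_of_prime (hprime P)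
  have hf₂ : normalizedFactors b₂ = _ := normalizedFactors_prod_of_prime (hprime (¬ P ·))
  refine ⟨b₁, b₂, hmul, ?_, hf₁, hf₂⟩
  have hb₁ : b₁ ≠ ⊥ := left_ne_zero_of_mul (hmul ▸ hq : b₁ * b₂ ≠ ⊥)
  have hb₂ : b₂ ≠ ⊥ := right_ne_zero_of_mul (hmul ▸ hq : b₁ * b₂ ≠ ⊥)
  by_contra h
  obtain ⟨m, hm, hle⟩ := Ideal.exists_le_maximal _ h
  have h₁ : m ∈ (normalizedFactors q).filter P :=
    hf₁ ▸ (Ideal.mem_normalizedFactors_iff hb₁).2 ⟨hm.isPrime, le_sup_left.trans hle⟩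
  have h₂ : m ∈ (normalizedFactors q).filter (¬ P ·) :=
    hf₂ ▸ (Ideal.mem_normalizedFactors_iff hb₂).2 ⟨hm.isPrime, le_sup_right.trans hle⟩
  exact Multiset.of_mem_filter h₂ (Multiset.of_mem_filter h₁)

lemma Ideal.exists_coprime_split {q q₁ q₂ : Ideal D} (hq : q ≠ ⊥) (hq₁ : q₁ ≠ ⊥) (hq₂ : q₂ ≠ ⊥) :
    ∃ b₁ b₂ : Ideal D, b₁ ⊔ b₂ = ⊤ ∧ b₁ ⊓ b₂ = q ∧ q₁ ⊔ q₂ ≤ q₁ ⊓ b₂ ⊔ q₂ ⊓ b₁ := by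
  classical
  obtain ⟨b₁, b₂, hmul, hcop, hf₁, hf₂⟩ := Ideal.exists_coprime_mul_eq_filter_normalizedFactors hq
    fun p => (normalizedFactors q₁).count p ≤ (normalizedFactors q₂).count p
  refine ⟨b₁, b₂, hcop, (Ideal.mul_eq_inf_of_coprime hcop).symm.trans hmul,
    le_trans ?_ (sup_le_sup Ideal.mul_le_inf Ideal.mul_le_inf)⟩
  have hb₁ : b₁ ≠ ⊥ := left_ne_zero_of_mul (hmul ▸ hq : b₁ * b₂ ≠ ⊥)
  have hb₂ : b₂ ≠ ⊥ := right_ne_zero_of_mul (hmul ▸ hq : b₁ * b₂ ≠ ⊥)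
  have h₁₂ : q₁ * b₂ ≠ ⊥ := mul_ne_zero hq₁ hb₂
  have h₂₁ : q₂ * b₁ ≠ ⊥ := mul_ne_zero hq₂ hb₁
  have hne : q₁ * b₂ ⊔ q₂ * b₁ ≠ ⊥ := ne_bot_of_le_ne_bot h₁₂ le_sup_left
  refine sup_le ((Ideal.le_iff_count_normalizedFactors_le hq₁ hne).2 fun p => ?_)
    ((Ideal.le_iff_count_normalizedFactors_le hq₂ hne).2 fun p => ?_) <;>
  · rw [Ideal.count_normalizedFactors_sup h₁₂ h₂₁, normalizedFactors_mul hq₁ hb₂,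
      normalizedFactors_mul hq₂ hb₁, Multiset.count_add, Multiset.count_add, hf₁, hf₂,
      Multiset.count_filter, Multiset.count_filter]
    split_ifs <;> omega

lemma exists_mem_isCoprime_add {J : Ideal D} {a c : D} (ha : a ≠ 0)
    (h : IsCoprime (Ideal.Quotient.mk J a) (Ideal.Quotient.mk J c)) :
    ∃ s ∈ J, IsCoprime a (c + s) := by
  classical
  have ha' : Ideal.span {a} ≠ ⊥ := by simpa using ha
  -- Choose `s ∈ J` with `c + s ≡ 1` modulo every prime of `a` not containing `J`; the primes of
  -- `a` containing `J` already miss `c`, hence `c + s`.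
  set S := (normalizedFactors (Ideal.span {a})).toFinset.filter (fun p => ¬ J ≤ p)
  have hmem : ∀ P : Ideal D, P.IsPrime → a ∈ P → ¬ J ≤ P → P ∈ S := fun P hP haP hJP =>
    Finset.mem_filter.2 ⟨Multiset.mem_toFinset.2 ((Ideal.mem_normalizedFactors_iff ha').2
      ⟨hP, (Ideal.span_singleton_le_iff_mem _).2 haP⟩), hJP⟩
  have hJS : J ⊔ ∏ p ∈ S, p = ⊤ := Ideal.sup_prod_eq_top fun p hp => by
    obtain ⟨hp, hJp⟩ := Finset.mem_filter.1 hp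
    rw [Multiset.mem_toFinset, Ideal.mem_normalizedFactors_iff ha'] at hp
    have hmax := hp.1.isMaximal (ne_bot_of_le_ne_bot ha' hp.2)
    exact codisjoint_iff.1 (hmax.out.not_le_iff_codisjoint.1 hJp).symm
  obtain ⟨s, hs, m, hm, hsm⟩ :=
    Submodule.mem_sup.1 (hJS ▸ Submodule.mem_top : 1 - c ∈ J ⊔ ∏ p ∈ S, p)
  refine ⟨s, hs, (Ideal.isCoprime_span_singleton_iff _ _).1
    (Ideal.coprime_of_no_prime_ge fun P haP hcsP hP => ?_)⟩
  rw [Ideal.span_singleton_le_iff_mem] at haP hcsP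
  by_cases hJP : J ≤ P
  · have hcP : c ∈ P := by simpa using sub_mem hcsP (hJP hs)
    have h0 := h.map (Ideal.Quotient.factor hJP)
    rw [Ideal.Quotient.factor_mk, Ideal.Quotient.factor_mk, Ideal.Quotient.eq_zero_iff_mem.2 haP,
      Ideal.Quotient.eq_zero_iff_mem.2 hcP, isCoprime_zero_left] at h0
    exact not_isUnit_zero h0
  · have hmP : m ∈ P := Ideal.prod_le_inf.trans (Finset.inf_le (hmem P hP haP hJP)) hm
    have h1 : c + s + m = 1 := by linear_combination hsm
    exact hP.ne_top ((Ideal.eq_top_iff_one P).2 (h1 ▸ add_mem hcsP hmP))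

lemma exists_isCoprime_lift {J : Ideal D} (hJ : J ≠ ⊥) {x y : D ⧸ J} (h : IsCoprime x y) :
    ∃ a c : D, Ideal.Quotient.mk J a = x ∧ Ideal.Quotient.mk J c = y ∧ IsCoprime a c := by
  obtain ⟨a, ha, rfl⟩ : ∃ a, a ≠ 0 ∧ Ideal.Quotient.mk J a = x := by
    obtain ⟨a, rfl⟩ := Ideal.Quotient.mk_surjective x
    by_cases ha : a = 0
    · obtain ⟨t, htJ, ht⟩ := Submodule.exists_mem_ne_zero_of_ne_bot hJ
      exact ⟨t, ht, by rw [ha, map_zero, Ideal.Quotient.eq_zero_iff_mem]; exact htJ⟩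
    · exact ⟨a, ha, rfl⟩
  obtain ⟨c, rfl⟩ := Ideal.Quotient.mk_surjective y
  obtain ⟨s, hs, hcop⟩ := exists_mem_isCoprime_add ha h
  exact ⟨a, c + s, rfl, by rw [map_add, Ideal.Quotient.eq_zero_iff_mem.2 hs, add_zero], hcop⟩

theorem Matrix.SpecialLinearGroup.map_mk_surjective {J : Ideal D} (hJ : J ≠ ⊥) :
    Function.Surjective (map (n := Fin 2) (Ideal.Quotient.mk J)) := by
  intro g
  obtain ⟨a, c, ha, hc, hac⟩ := exists_isCoprime_lift hJ (g.isCoprime_col 0)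
  obtain ⟨g', hg'₀, hg'₁⟩ := hac.exists_SL2_col 0
  obtain ⟨t, ht⟩ := exists_eq_mul_Tm_of_col_eq (g := g) (g' := map (Ideal.Quotient.mk J) g')
    (by simp [hg'₀, ha]) (by simp [hg'₁, hc])
  obtain ⟨t, rfl⟩ := Ideal.Quotient.mk_surjective t
  exact ⟨g' * Tm D t, by rw [map_mul, map_Tm, ht]⟩

theorem Matrix.SpecialLinearGroup.exists_map_mk_eq_map_mk {b₁ b₂ : Ideal D} (hb : b₁ ⊓ b₂ ≠ ⊥)
    (hcop : b₁ ⊔ b₂ = ⊤) (g₁ g₂ : SL(2, D)) : ∃ g₀ : SL(2, D),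
      map (Ideal.Quotient.mk b₁) g₀ = map (Ideal.Quotient.mk b₁) g₁ ∧
      map (Ideal.Quotient.mk b₂) g₀ = map (Ideal.Quotient.mk b₂) g₂ := by
  obtain ⟨A, hA₁, hA₂⟩ := Matrix.exists_map_mk_eq_map_mk hcop (g₁ : Matrix (Fin 2) (Fin 2) D) g₂
  have hdet : ∀ {b : Ideal D} {g : SL(2, D)}, A.map (Ideal.Quotient.mk b) =
      (g : Matrix (Fin 2) (Fin 2) D).map (Ideal.Quotient.mk b) → A.det - 1 ∈ b := by
    intro b g h
    rw [← Ideal.Quotient.eq, RingHom.map_det, RingHom.mapMatrix_apply, h,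
      ← RingHom.mapMatrix_apply, ← RingHom.map_det, g.det_coe]
  obtain ⟨g₀, hg₀⟩ := map_mk_surjective hb ⟨A.map (Ideal.Quotient.mk (b₁ ⊓ b₂)), by
    rw [← RingHom.mapMatrix_apply, ← RingHom.map_det, ← map_one (Ideal.Quotient.mk _),
      Ideal.Quotient.eq]
    exact ⟨hdet hA₁, hdet hA₂⟩⟩
  have hg₀A : ∀ i j, g₀ i j - A i j ∈ b₁ ⊓ b₂ := fun i j =>
    Ideal.Quotient.eq.1 (congrArg (fun g => g i j) hg₀)
  refine ⟨g₀, map_mk_eq_map_mk_iff.2 fun i j => ?_, map_mk_eq_map_mk_iff.2 fun i j => ?_⟩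
  · simpa using add_mem (hg₀A i j).1 (Matrix.map_mk_eq_map_mk_iff.1 hA₁ i j)
  · simpa using add_mem (hg₀A i j).2 (Matrix.map_mk_eq_map_mk_iff.1 hA₂ i j)

end Dedekind

theorem statement5_general {D : Type*} [CommRing D] [IsDedekindDomain D]
    (H : Subgroup (Matrix.SpecialLinearGroup (Fin 2) D)) (hH : IsCongruence H)
    (g₁ g₂ : Matrix.SpecialLinearGroup (Fin 2) D) (q₁ q₂ : Ideal D)
    (hq₁ : q₁ ≠ ⊥) (hq₂ : q₂ ≠ ⊥)
    (h₁ : ∀ x ∈ q₁, g₁ * Tm D x * g₁⁻¹ ∈ H)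
    (h₂ : ∀ x ∈ q₂, g₂ * Tm D x * g₂⁻¹ ∈ H) :
    ∃ g₀ : Matrix.SpecialLinearGroup (Fin 2) D,
      ∀ x ∈ q₁ + q₂, g₀ * Tm D x * g₀⁻¹ ∈ H := by
  obtain ⟨q, hq, hqH⟩ := hH
  obtain ⟨b₁, b₂, hcop, hinf, hsplit⟩ := Ideal.exists_coprime_split hq hq₁ hq₂
  obtain ⟨g₀, hg₀₁, hg₀₂⟩ :=
    Matrix.SpecialLinearGroup.exists_map_mk_eq_map_mk (hinf ▸ hq) hcop g₁ g₂
  have hH₁₂ : SLmod D b₁ ⊓ SLmod D b₂ ≤ H := by rwa [← SLmod_inf, hinf]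
  have hH₂₁ : SLmod D b₂ ⊓ SLmod D b₁ ≤ H := inf_comm (SLmod D b₁) _ ▸ hH₁₂
  refine ⟨g₀, fun x hx => ?_⟩
  obtain ⟨x₁, ⟨hx₁, hx₁b⟩, x₂, ⟨hx₂, hx₂b⟩, rfl⟩ := Submodule.mem_sup.1 (hsplit hx)
  rw [conj_Tm_add]
  exact mul_mem (conj_Tm_mem_of_map_eq hH₁₂ hg₀₁ hx₁b (h₁ x₁ hx₁))
    (conj_Tm_mem_of_map_eq hH₂₁ hg₀₂ hx₂b (h₂ x₂ hx₂))

/-- Theorem 2.7. Let `H` be a congruence subgroup of `SL₂(D)`,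
`g₁, g₂ ∈ SL₂(D)` and `q₁, q₂` nonzero ideals with `gᵢ T(x) gᵢ⁻¹ ∈ H` for all `x ∈ qᵢ`.
Then there is `g₀ ∈ SL₂(D)` with `g₀ T(x) g₀⁻¹ ∈ H` for all `x ∈ q₁ + q₂`. -/
theorem statement5 {D : Type*} [CommRing D] [IsDomain D] [IsDedekindDomain D]
    (H : Subgroup (Matrix.SpecialLinearGroup (Fin 2) D)) (hH : IsCongruence H)
    (g₁ g₂ : Matrix.SpecialLinearGroup (Fin 2) D) (q₁ q₂ : Ideal D)
    (hq₁ : q₁ ≠ ⊥) (hq₂ : q₂ ≠ ⊥)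
    (h₁ : ∀ x ∈ q₁, g₁ * Tm D x * g₁⁻¹ ∈ H)
    (h₂ : ∀ x ∈ q₂, g₂ * Tm D x * g₂⁻¹ ∈ H) :
    ∃ g₀ : Matrix.SpecialLinearGroup (Fin 2) D,
      ∀ x ∈ q₁ + q₂, g₀ * Tm D x * g₀⁻¹ ∈ H :=
  statement5_general H hH g₁ g₂ q₁ q₂ hq₁ hq₂ h₁ h₂
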